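/- Let A, E : ℝ³ → ℝ³ and φ : ℝ³ → ℝ be smooth, and let a, e : ℝ³ → ℝ³ be smooth compactly supported vector fields with div e = 0. Then the first variation of the energy functional in the direction (a, e) equals the contraction of the Maxwell evolution vector field with the pre-symplectic pairing: ∫_{ℝ³} ( E · e + ½ Σ_{j,k=1}^3 (∂_j A_k − ∂_k A_j)(∂_j a_k − ∂_k a_j) ) dx = ∫_{ℝ³} ( (E + ∇φ) · e − a · (ΔA − ∇(div A)) ) dx, i.e. dℰ(A, E)(a, e) = ω(Γ_φ(A, E), (a, e)), for every choice of the gauge function φ. -/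

import Mathlib

open MeasureTheory

/-- Partial derivative `∂_j f` of a scalar function on `ℝ³`. -/
noncomputable def pd (f : (Fin 3 → ℝ) → ℝ) (j : Fin 3) (x : Fin 3 → ℝ) : ℝ :=
  fderiv ℝ f x (Pi.single j 1)

/-- Divergence `div F = Σ_j ∂_j F_j` of a vector field on `ℝ³`. -/
noncomputable def div3 (F : (Fin 3 → ℝ) → (Fin 3 → ℝ)) (x : Fin 3 → ℝ) : ℝ :=
  ∑ j, pd (fun y => F y j) j x

/-- Laplacian `Δf = Σ_j ∂_j² f` of a scalar function on `ℝ³`. -/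
noncomputable def lap3 (f : (Fin 3 → ℝ) → ℝ) (x : Fin 3 → ℝ) : ℝ :=
  ∑ j, pd (pd f j) j x

/-- Curl of a vector field on `ℝ³`. -/
noncomputable def curl3 (F : (Fin 3 → ℝ) → (Fin 3 → ℝ)) (x : Fin 3 → ℝ) : Fin 3 → ℝ :=
  ![pd (fun y => F y 2) 1 x - pd (fun y => F y 1) 2 x,
    pd (fun y => F y 0) 2 x - pd (fun y => F y 2) 0 x,
    pd (fun y => F y 1) 0 x - pd (fun y => F y 0) 1 x]

/-!
Writing `F_{jk} = ∂_j A_k − ∂_k A_j`, antisymmetry turns `½ Σ F_{jk}(A) F_{jk}(a)` into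
`Σ F_{jk}(A) ∂_j a_k`; integrating by parts moves `∂_j` onto `F`, and by the symmetry of second
derivatives `Σ_j ∂_j F_{jk} = ΔA_k − ∂_k div A`. The gauge term `∫ ∇φ · e` integrates by parts to
`−∫ φ div e = 0`.
-/

section PartialDerivatives

variable {f g : (Fin 3 → ℝ) → ℝ}

theorem ContDiff.pd {m n : WithTop ℕ∞} (hf : ContDiff ℝ n f) (hmn : m + 1 ≤ n) (j : Fin 3) :
    ContDiff ℝ m (_root_.pd f j) :=
  (hf.fderiv_right hmn).clm_apply contDiff_const

theorem HasCompactSupport.pd (hf : HasCompactSupport f) (j : Fin 3) :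
    HasCompactSupport (pd f j) :=
  hf.fderiv ℝ |>.comp_left (g := fun L : (Fin 3 → ℝ) →L[ℝ] ℝ => L (Pi.single j 1)) rfl

theorem pd_sub (hf : Differentiable ℝ f) (hg : Differentiable ℝ g) (j : Fin 3)
    (x : Fin 3 → ℝ) : pd (fun y => f y - g y) j x = pd f j x - pd g j x := by
  simp [pd, fderiv_fun_sub (hf x) (hg x)]

theorem pd_sum {ι : Type*} (s : Finset ι) {f : ι → (Fin 3 → ℝ) → ℝ}
    (hf : ∀ i, Differentiable ℝ (f i)) (j : Fin 3) (x : Fin 3 → ℝ) :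
    pd (fun y => ∑ i ∈ s, f i y) j x = ∑ i ∈ s, pd (f i) j x := by
  simp [pd, fderiv_fun_sum fun i _ => hf i x]

theorem pd_pd_comm (hf : ContDiff ℝ 2 f) (j k : Fin 3) (x : Fin 3 → ℝ) :
    pd (pd f j) k x = pd (pd f k) j x := by
  have hf' : Differentiable ℝ (fderiv ℝ f) := (hf.fderiv_right le_rfl).differentiable one_ne_zero
  have pd_pd (j k : Fin 3) :
      pd (pd f j) k x = fderiv ℝ (fderiv ℝ f) x (Pi.single k 1) (Pi.single j 1) := by
    show fderiv ℝ (fun y => fderiv ℝ f y (Pi.single j 1)) x (Pi.single k 1) = _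
    simp [fderiv_clm_apply (hf' x) (differentiableAt_const _)]
  rw [pd_pd, pd_pd, (hf.contDiffAt (x := x)).isSymmSndFDerivAt (by simp)]

end PartialDerivatives

theorem integrable_finsetSum_mul {X ι : Type*} [TopologicalSpace X] [MeasurableSpace X]
    [OpensMeasurableSpace X] {μ : Measure X} [IsFiniteMeasureOnCompacts μ] (s : Finset ι)
    {f g : ι → X → ℝ} (hf : ∀ i, Continuous (f i)) (hg : ∀ i, Continuous (g i))
    (hfg : ∀ i, HasCompactSupport (f i * g i)) :
    Integrable (fun x => ∑ i ∈ s, f i x * g i x) μ :=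
  integrable_finsetSum _ fun i _ => ((hf i).mul (hg i)).integrable_of_hasCompactSupport (hfg i)

theorem HasCompactSupport.apply {X ι : Type*} {M : ι → Type*} [TopologicalSpace X]
    [∀ i, Zero (M i)] {f : X → ∀ i, M i} (hf : HasCompactSupport f) (i : ι) :
    HasCompactSupport (fun x => f x i) :=
  hf.comp_left (g := fun v : ∀ i, M i => v i) rfl

section IntegrationByParts

variable {f g : (Fin 3 → ℝ) → ℝ}

theorem integral_mul_pd_eq_neg (hf : ContDiff ℝ 1 f) (hg : ContDiff ℝ 1 g)
    (hcg : HasCompactSupport g) (j : Fin 3) :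
    ∫ x, f x * pd g j x = -∫ x, pd f j x * g x :=
  integral_mul_fderiv_eq_neg_fderiv_mul_of_integrable
    (((hf.pd (m := 0) (by norm_num) j).continuous.mul hg.continuous).integrable_of_hasCompactSupport
      hcg.mul_left)
    ((hf.continuous.mul (hg.pd (m := 0) (by norm_num) j).continuous).integrable_of_hasCompactSupport
      (hcg.pd j).mul_left)
    ((hf.continuous.mul hg.continuous).integrable_of_hasCompactSupport hcg.mul_left)
    (fun x _ => hf.differentiable one_ne_zero x) (fun x _ => hg.differentiable one_ne_zero x)

theorem integral_sum_mul_pd_eq_neg {ι : Type*} (s : Finset ι) {f g : ι → (Fin 3 → ℝ) → ℝ}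
    (hf : ∀ i, ContDiff ℝ 1 (f i)) (hg : ∀ i, ContDiff ℝ 1 (g i))
    (hcg : ∀ i, HasCompactSupport (g i)) (j : ι → Fin 3) :
    ∫ x, ∑ i ∈ s, f i x * pd (g i) (j i) x = -∫ x, ∑ i ∈ s, pd (f i) (j i) x * g i x := by
  have hf' (i : ι) : Continuous (pd (f i) (j i)) := ((hf i).pd (m := 0) (by norm_num) _).continuous
  have hg' (i : ι) : Continuous (pd (g i) (j i)) := ((hg i).pd (m := 0) (by norm_num) _).continuous
  rw [integral_finsetSum _ fun i _ => ?_, integral_finsetSum _ fun i _ => ?_,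
    ← Finset.sum_neg_distrib]
  · exact Finset.sum_congr rfl fun i _ => integral_mul_pd_eq_neg (hf i) (hg i) (hcg i) (j i)
  · exact ((hf' i).mul (hg i).continuous).integrable_of_hasCompactSupport (hcg i).mul_left
  · exact ((hf i).continuous.mul (hg' i)).integrable_of_hasCompactSupport ((hcg i).pd _).mul_left

end IntegrationByParts

theorem sum_sum_mul_sub_swap_of_antisymm {R ι : Type*} [CommRing R] [Fintype ι]
    {F : ι → ι → R} (hF : ∀ j k, F k j = -F j k) (G : ι → ι → R) :
    ∑ j, ∑ k, F j k * (G j k - G k j) = 2 * ∑ j, ∑ k, F j k * G j k := by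
  have swap : ∑ j, ∑ k, F j k * G k j = -∑ j, ∑ k, F j k * G j k := by
    rw [Finset.sum_comm]
    simp only [← Finset.sum_neg_distrib, ← neg_mul, ← hF]
  simp only [mul_sub, Finset.sum_sub_distrib, swap]
  ring

noncomputable def fieldStrength (A : (Fin 3 → ℝ) → (Fin 3 → ℝ)) (j k : Fin 3)
    (x : Fin 3 → ℝ) : ℝ :=
  pd (fun y => A y k) j x - pd (fun y => A y j) k x

theorem fieldStrength_swap (A : (Fin 3 → ℝ) → (Fin 3 → ℝ)) (j k : Fin 3) (x : Fin 3 → ℝ) :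
    fieldStrength A k j x = -fieldStrength A j k x :=
  (neg_sub _ _).symm

theorem half_sum_sum_fieldStrength_mul_fieldStrength (A a : (Fin 3 → ℝ) → (Fin 3 → ℝ))
    (x : Fin 3 → ℝ) :
    (1 / 2) * ∑ j, ∑ k, fieldStrength A j k x * fieldStrength a j k x
      = ∑ j, ∑ k, fieldStrength A j k x * pd (fun y => a y k) j x := by
  calc (1 / 2) * ∑ j, ∑ k, fieldStrength A j k x * fieldStrength a j k x
      = (1 / 2) * (2 * ∑ j, ∑ k, fieldStrength A j k x * pd (fun y => a y k) j x) :=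
        congrArg _ <| sum_sum_mul_sub_swap_of_antisymm (fieldStrength_swap A · · x)
          fun j k => pd (fun y => a y k) j x
    _ = _ := by ring

section FieldStrength

variable {A : (Fin 3 → ℝ) → (Fin 3 → ℝ)}

theorem ContDiff.fieldStrength {m n : WithTop ℕ∞} (hA : ContDiff ℝ n A) (hmn : m + 1 ≤ n)
    (j k : Fin 3) : ContDiff ℝ m (_root_.fieldStrength A j k) :=
  ((contDiff_pi.mp hA k).pd hmn j).sub ((contDiff_pi.mp hA j).pd hmn k)

theorem sum_pd_fieldStrength (hA : ContDiff ℝ 2 A) (k : Fin 3) (x : Fin 3 → ℝ) :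
    ∑ j, pd (fieldStrength A j k) j x = lap3 (fun y => A y k) x - pd (div3 A) k x := by
  have hA' (i j : Fin 3) : Differentiable ℝ (pd (fun y => A y i) j) :=
    ((contDiff_pi.mp hA i).pd (m := 1) (by norm_num) j).differentiable one_ne_zero
  have pd_div : pd (div3 A) k x = ∑ j, pd (pd (fun y => A y j) k) j x := by
    unfold div3
    rw [pd_sum _ fun j => hA' j j]
    exact Finset.sum_congr rfl fun j _ => pd_pd_comm (contDiff_pi.mp hA j) j k x
  have pd_fieldStrength (j : Fin 3) : pd (fieldStrength A j k) j x
      = pd (pd (fun y => A y k) j) j x - pd (pd (fun y => A y j) k) j x :=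
    pd_sub (hA' k j) (hA' j k) j x
  simp only [pd_fieldStrength, Finset.sum_sub_distrib, pd_div, lap3]

theorem continuous_lap3_sub_pd_div3 (hA : ContDiff ℝ 2 A) (k : Fin 3) :
    Continuous fun x => lap3 (fun y => A y k) x - pd (div3 A) k x := by
  simp only [← sum_pd_fieldStrength hA]
  exact continuous_finsetSum _ fun j _ =>
    ((hA.fieldStrength (m := 1) (by norm_num) j k).pd (m := 0) (by norm_num) j).continuous

theorem integrable_sum_sum_fieldStrength_mul_pd (hA : ContDiff ℝ 1 A)
    {a : (Fin 3 → ℝ) → (Fin 3 → ℝ)} (ha : ContDiff ℝ 1 a) (hca : HasCompactSupport a) :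
    Integrable fun x => ∑ j, ∑ k, fieldStrength A j k x * pd (fun y => a y k) j x :=
  integrable_finsetSum _ fun j _ => integrable_finsetSum_mul _
    (fun k => (hA.fieldStrength (m := 0) (by norm_num) j k).continuous)
    (fun k => ((contDiff_pi.mp ha k).pd (m := 0) (by norm_num) j).continuous)
    (fun k => ((hca.apply k).pd j).mul_left)

theorem integral_sum_sum_fieldStrength_mul_pd (hA : ContDiff ℝ 2 A)
    {a : (Fin 3 → ℝ) → (Fin 3 → ℝ)} (ha : ContDiff ℝ 1 a) (hca : HasCompactSupport a) :
    ∫ x, ∑ j, ∑ k, fieldStrength A j k x * pd (fun y => a y k) j x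
      = -∫ x, ∑ k, a x k * (lap3 (fun y => A y k) x - pd (div3 A) k x) := by
  simp only [← Fintype.sum_prod_type']
  rw [integral_sum_mul_pd_eq_neg _ (fun p => hA.fieldStrength (by norm_num) p.1 p.2)
    (fun p => contDiff_pi.mp ha p.2) (fun p => hca.apply p.2) Prod.fst]
  congr 2 with x
  rw [Fintype.sum_prod_type, Finset.sum_comm]
  dsimp only
  exact Finset.sum_congr rfl fun k _ => by
    rw [← Finset.sum_mul, sum_pd_fieldStrength hA, mul_comm]

end FieldStrength

theorem integral_sum_pd_mul_eq_zero_of_div3_eq_zero {φ : (Fin 3 → ℝ) → ℝ}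
    {e : (Fin 3 → ℝ) → (Fin 3 → ℝ)} (hφ : ContDiff ℝ 1 φ) (he : ContDiff ℝ 1 e)
    (hce : HasCompactSupport e) (hdiv : ∀ x, div3 e x = 0) :
    ∫ x, ∑ i, pd φ i x * e x i = 0 := by
  have ibp := integral_sum_mul_pd_eq_neg Finset.univ (fun _ => hφ) (contDiff_pi.mp he)
    hce.apply id
  have φ_mul_div (x : Fin 3 → ℝ) : ∑ i, φ x * pd (fun y => e y i) i x = 0 := by
    rw [← Finset.mul_sum]
    exact mul_eq_zero_of_right _ (hdiv x)
  simp only [φ_mul_div, integral_zero, id] at ibp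
  exact neg_eq_zero.mp ibp.symm

/-- The identity `dℰ(A,E)(a,e) = ω(Γ_φ(A,E),(a,e))` determining the Hamiltonian
of free Electrodynamics on the Gauss-constraint subspace: for smooth fields
`A, E, φ` and smooth compactly supported `(a, e)` with `div e = 0`, the first
variation of the energy in the direction `(a, e)` equals the contraction of the
Maxwell evolution vector field `Γ_φ(A,E) = (E + ∇φ, ΔA − ∇ div A)` with the
pre-symplectic pairing. -/
theorem stmt17 (A E : (Fin 3 → ℝ) → (Fin 3 → ℝ)) (φ : (Fin 3 → ℝ) → ℝ)
    (hA : ContDiff ℝ (⊤ : ℕ∞) A) (hE : ContDiff ℝ (⊤ : ℕ∞) E)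
    (hφ : ContDiff ℝ (⊤ : ℕ∞) φ)
    (a e : (Fin 3 → ℝ) → (Fin 3 → ℝ))
    (ha : ContDiff ℝ (⊤ : ℕ∞) a) (hca : HasCompactSupport a)
    (he : ContDiff ℝ (⊤ : ℕ∞) e) (hce : HasCompactSupport e)
    (hdive : ∀ x : Fin 3 → ℝ, div3 e x = 0) :
    (∫ x : Fin 3 → ℝ, (∑ i, E x i * e x i
        + (1/2) * ∑ j, ∑ k, (pd (fun y => A y k) j x - pd (fun y => A y j) k x)
            * (pd (fun y => a y k) j x - pd (fun y => a y j) k x)))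
      = ∫ x : Fin 3 → ℝ, (∑ i, (E x i + pd φ i x) * e x i
          - ∑ i, a x i * (lap3 (fun y => A y i) x - pd (div3 A) i x)) := by
  have hA2 : ContDiff ℝ 2 A := contDiff_infty.mp hA 2
  have ha1 : ContDiff ℝ 1 a := contDiff_infty.mp ha 1
  have hφ1 : ContDiff ℝ 1 φ := contDiff_infty.mp hφ 1
  have hEe := integrable_finsetSum_mul (μ := volume) Finset.univ
    (fun i => (contDiff_pi.mp hE i).continuous) (fun i => (contDiff_pi.mp he i).continuous)
    (fun i => (hce.apply i).mul_left)
  have hφe := integrable_finsetSum_mul (μ := volume) Finset.univ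
    (fun i => (hφ1.pd (m := 0) (by norm_num) i).continuous)
    (fun i => (contDiff_pi.mp he i).continuous) (fun i => (hce.apply i).mul_left)
  have haV := integrable_finsetSum_mul (μ := volume) Finset.univ
    (fun i => (contDiff_pi.mp ha1 i).continuous) (continuous_lap3_sub_pd_div3 hA2)
    (fun i => (hca.apply i).mul_right)
  calc _ = ∫ x, (∑ i, E x i * e x i
          + ∑ j, ∑ k, fieldStrength A j k x * pd (fun y => a y k) j x) :=
        integral_congr_ae <| .of_forall fun x =>
          congrArg _ (half_sum_sum_fieldStrength_mul_fieldStrength A a x)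
    _ = (∫ x, ∑ i, E x i * e x i) + (∫ x, ∑ i, pd φ i x * e x i)
        - ∫ x, ∑ i, a x i * (lap3 (fun y => A y i) x - pd (div3 A) i x) := by
        rw [integral_add hEe
            (integrable_sum_sum_fieldStrength_mul_pd (hA2.of_le one_le_two) ha1 hca),
          integral_sum_sum_fieldStrength_mul_pd hA2 ha1 hca,
          integral_sum_pd_mul_eq_zero_of_div3_eq_zero hφ1 (contDiff_infty.mp he 1) hce hdive]
        ring
    _ = _ := by
        simp only [add_mul, Finset.sum_add_distrib]
        rw [integral_sub (by exact hEe.add hφe) haV, integral_add hEe hφe]
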